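/- Fix integers k ≥ 1 and M ≥ 1, and reals σ_w² > 0, ζ > 0, σ_a² > 0. For z ≥ 0 let Λ(z) = e^{σ_a²/ζ}·(∫_{σ_w²+σ_a²}^∞ v^{-k} e^{-z/v} e^{-v/ζ} dv)/(∫_{σ_w²}^∞ v^{-k} e^{-z/v} e^{-v/ζ} dv). Then the function Λ_M : [0,∞)^M → (0,∞) defined by Λ_M(z₁,…,z_M) = ∏_{m=1}^M Λ(z_m) is strictly increasing in each coordinate: if z and z' agree in all coordinates except the m-th and z_m < z'_m, then Λ_M(z) < Λ_M(z'). -/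

import Mathlib

/-!
Write `g_z(v) = v^{-k} e^{-z/v} e^{-v/ζ}`, `a = σ_w²`, `b = σ_w² + σ_a²`, so that
`Λ(z) = e^{σ_a²/ζ} N(z) / (A(z) + N(z))` with `A(z) = ∫_a^b g_z` and `N(z) = ∫_b^∞ g_z`.
Raising `z` to `z + δ` multiplies `g_z(v)` by `e^{-δ/v}`, which is strictly increasing in `v`.
With `c = e^{-δ/b}` this gives `A(z + δ) ≤ c A(z)` and `N(z + δ) > c N(z)`, so the fraction
of the mass lying beyond `b` strictly increases.
-/

open MeasureTheory Set

lemma setIntegral_pos_of_forall_pos {X : Type*} [MeasurableSpace X] {μ : Measure X}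
    {s : Set X} {f : X → ℝ} (hs : MeasurableSet s) (hμs : 0 < μ s)
    (hf : IntegrableOn f s μ) (hpos : ∀ x ∈ s, 0 < f x) :
    0 < ∫ x in s, f x ∂μ := by
  rw [setIntegral_pos_iff_support_of_nonneg_ae _ hf]
  · exact hμs.trans_le (measure_mono fun x hx => ⟨(hpos x hx).ne', hx⟩)
  · filter_upwards [ae_restrict_mem hs] with x hx using (hpos x hx).le

lemma div_add_lt_div_add_of_le_mul_of_mul_lt {A N A' N' c : ℝ} (hA : 0 < A) (hN : 0 < N)
    (hA' : 0 ≤ A') (hN' : 0 < N') (hAA' : A' ≤ c * A) (hNN' : c * N < N') :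
    N / (A + N) < N' / (A' + N') := by
  rw [div_lt_div_iff₀ (by positivity) (by positivity)]
  nlinarith [mul_le_mul_of_nonneg_left hAA' hN.le, mul_lt_mul_of_pos_left hNN' hA]

lemma setIntegral_Ioi_div_setIntegral_Ioi_lt {f f' : ℝ → ℝ} {a b c : ℝ} (hab : a < b)
    (hf : IntegrableOn f (Ioi a)) (hf' : IntegrableOn f' (Ioi a))
    (hf_pos : ∀ v ∈ Ioi a, 0 < f v) (hf'_pos : ∀ v ∈ Ioi a, 0 < f' v)
    (h_low : ∀ v ∈ Ioc a b, f' v ≤ c * f v) (h_high : ∀ v ∈ Ioi b, c * f v < f' v) :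
    (∫ v in Ioi b, f v) / (∫ v in Ioi a, f v) < (∫ v in Ioi b, f' v) / ∫ v in Ioi a, f' v := by
  have hIoc : Ioc a b ⊆ Ioi a := Ioc_subset_Ioi_self
  have hIoi : Ioi b ⊆ Ioi a := Ioi_subset_Ioi hab.le
  have split : ∀ g : ℝ → ℝ, IntegrableOn g (Ioi a) →
      ∫ v in Ioi a, g v = (∫ v in Ioc a b, g v) + ∫ v in Ioi b, g v := fun g hg => by
    rw [← Ioc_union_Ioi_eq_Ioi hab.le, setIntegral_union (Ioc_disjoint_Ioi le_rfl)
      measurableSet_Ioi (hg.mono_set hIoc) (hg.mono_set hIoi)]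
  rw [split f hf, split f' hf']
  refine div_add_lt_div_add_of_le_mul_of_mul_lt (c := c)
    (setIntegral_pos_of_forall_pos measurableSet_Ioc (by simp [hab]) (hf.mono_set hIoc)
      fun v hv => hf_pos v (hIoc hv))
    (setIntegral_pos_of_forall_pos measurableSet_Ioi (by simp) (hf.mono_set hIoi)
      fun v hv => hf_pos v (hIoi hv))
    (setIntegral_nonneg measurableSet_Ioc fun v hv => (hf'_pos v (hIoc hv)).le)
    (setIntegral_pos_of_forall_pos measurableSet_Ioi (by simp) (hf'.mono_set hIoi)
      fun v hv => hf'_pos v (hIoi hv)) ?_ ?_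
  · rw [← integral_const_mul]
    exact setIntegral_mono_on (hf'.mono_set hIoc) ((hf.mono_set hIoc).const_mul c)
      measurableSet_Ioc h_low
  · have h_diff : 0 < ∫ v in Ioi b, (f' v - c * f v) :=
      setIntegral_pos_of_forall_pos measurableSet_Ioi (by simp)
        ((hf'.mono_set hIoi).sub ((hf.mono_set hIoi).const_mul c))
        fun v hv => sub_pos.mpr (h_high v hv)
    rw [integral_sub (hf'.mono_set hIoi) ((hf.mono_set hIoi).const_mul c),
      integral_const_mul] at h_diff
    linarith

noncomputable def mixtureIntegrand (k : ℕ) (ζ z v : ℝ) : ℝ :=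
  (v ^ k)⁻¹ * Real.exp (-z / v) * Real.exp (-v / ζ)

lemma mixtureIntegrand_pos (k : ℕ) (ζ z : ℝ) {v : ℝ} (hv : 0 < v) :
    0 < mixtureIntegrand k ζ z v := by
  unfold mixtureIntegrand
  positivity

lemma mixtureIntegrand_add (k : ℕ) (ζ z δ : ℝ) {v : ℝ} (hv : v ≠ 0) :
    mixtureIntegrand k ζ (z + δ) v = Real.exp (-δ / v) * mixtureIntegrand k ζ z v := by
  unfold mixtureIntegrand
  rw [show -(z + δ) / v = -δ / v + -z / v by field_simp; ring, Real.exp_add]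
  ring

lemma integrableOn_Ioi_mixtureIntegrand (k : ℕ) {ζ z a : ℝ} (hζ : 0 < ζ) (hz : 0 ≤ z)
    (ha : 0 < a) : IntegrableOn (mixtureIntegrand k ζ z) (Ioi a) := by
  have hne : ∀ v ∈ Ioi a, v ≠ 0 := fun v hv => (ha.trans hv).ne'
  have hcont : ContinuousOn (mixtureIntegrand k ζ z) (Ioi a) :=
    (((continuous_pow k).continuousOn.inv₀ fun v hv => pow_ne_zero k (hne v hv)).mul
      (continuousOn_const.div continuousOn_id hne).rexp).mul
      (continuous_id.neg.div_const ζ).rexp.continuousOn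
  refine ((exp_neg_integrableOn_Ioi a (inv_pos.mpr hζ)).const_mul (a ^ k)⁻¹).mono'
    (hcont.aestronglyMeasurable measurableSet_Ioi) ?_
  filter_upwards [ae_restrict_mem measurableSet_Ioi] with v (hv : a < v)
  have hv0 : 0 < v := ha.trans hv
  rw [Real.norm_of_nonneg (mixtureIntegrand_pos k ζ z hv0).le, mixtureIntegrand,
    show -ζ⁻¹ * v = -v / ζ by ring]
  have h_exp : Real.exp (-z / v) ≤ 1 :=
    Real.exp_le_one_iff.mpr (div_nonpos_of_nonpos_of_nonneg (neg_nonpos.mpr hz) hv0.le)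
  calc (v ^ k)⁻¹ * Real.exp (-z / v) * Real.exp (-v / ζ)
      ≤ (a ^ k)⁻¹ * 1 * Real.exp (-v / ζ) := by gcongr
    _ = (a ^ k)⁻¹ * Real.exp (-v / ζ) := by ring

section TailFraction

variable (k : ℕ) {ζ a b : ℝ}

lemma mixture_tail_fraction_pos (hζ : 0 < ζ) (ha : 0 < a) (hab : a ≤ b) {z : ℝ} (hz : 0 ≤ z) :
    0 < (∫ v in Ioi b, mixtureIntegrand k ζ z v) / ∫ v in Ioi a, mixtureIntegrand k ζ z v := by
  have hpos : ∀ c, 0 < c → 0 < ∫ v in Ioi c, mixtureIntegrand k ζ z v := fun c hc =>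
    setIntegral_pos_of_forall_pos measurableSet_Ioi (by simp)
      (integrableOn_Ioi_mixtureIntegrand k hζ hz hc)
      fun v hv => mixtureIntegrand_pos k ζ z (hc.trans hv)
  exact div_pos (hpos b (ha.trans_le hab)) (hpos a ha)

lemma mixture_tail_fraction_strictMonoOn (hζ : 0 < ζ) (ha : 0 < a) (hab : a < b) :
    StrictMonoOn (fun z => (∫ v in Ioi b, mixtureIntegrand k ζ z v) /
      ∫ v in Ioi a, mixtureIntegrand k ζ z v) (Ici 0) := by
  intro z (hz : 0 ≤ z) z' (hz' : 0 ≤ z') hzz'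
  have hδ : 0 < z' - z := sub_pos.mpr hzz'
  have h_shift : ∀ v, 0 < v →
      mixtureIntegrand k ζ z' v = Real.exp (-(z' - z) / v) * mixtureIntegrand k ζ z v :=
    fun v hv => by rw [← mixtureIntegrand_add k ζ z _ hv.ne', add_sub_cancel]
  refine setIntegral_Ioi_div_setIntegral_Ioi_lt (c := Real.exp (-(z' - z) / b)) hab
    (integrableOn_Ioi_mixtureIntegrand k hζ hz ha)
    (integrableOn_Ioi_mixtureIntegrand k hζ hz' ha)
    (fun v hv => mixtureIntegrand_pos k ζ z (ha.trans hv))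
    (fun v hv => mixtureIntegrand_pos k ζ z' (ha.trans hv)) ?_ ?_
  · rintro v ⟨hav, hvb⟩
    have hv : 0 < v := ha.trans hav
    rw [h_shift v hv]
    refine mul_le_mul_of_nonneg_right ?_ (mixtureIntegrand_pos k ζ z hv).le
    rw [Real.exp_le_exp, neg_div, neg_div, neg_le_neg_iff]
    exact div_le_div_of_nonneg_left hδ.le hv hvb
  · intro v (hbv : b < v)
    have hv : 0 < v := (ha.trans hab).trans hbv
    rw [h_shift v hv]
    refine mul_lt_mul_of_pos_right ?_ (mixtureIntegrand_pos k ζ z hv)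
    rw [Real.exp_lt_exp, neg_div, neg_div, neg_lt_neg_iff]
    exact div_lt_div_of_pos_left hδ (ha.trans hab) hbv

end TailFraction

theorem product_likelihood_ratio_strict_mono_each_coordinate_general
    (k M : ℕ)
    (σw2 ζ σa2 : ℝ) (hσw2 : 0 < σw2) (hζ : 0 < ζ) (hσa2 : 0 < σa2)
    (Λ : ℝ → ℝ)
    (hΛ : ∀ z : ℝ, Λ z = Real.exp (σa2 / ζ) *
      (∫ v in Set.Ioi (σw2 + σa2),
        (v ^ k)⁻¹ * Real.exp (-z / v) * Real.exp (-v / ζ)) /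
      (∫ v in Set.Ioi σw2,
        (v ^ k)⁻¹ * Real.exp (-z / v) * Real.exp (-v / ζ))) :
    (∀ z : Fin M → ℝ, (∀ i, 0 ≤ z i) → 0 < ∏ i, Λ (z i)) ∧
    (∀ (z z' : Fin M → ℝ) (m : Fin M), (∀ i, 0 ≤ z i) → (∀ i, 0 ≤ z' i) →
      (∀ i, i ≠ m → z i = z' i) → z m < z' m →
      ∏ i, Λ (z i) < ∏ i, Λ (z' i)) := by
  have hab : σw2 < σw2 + σa2 := lt_add_of_pos_right σw2 hσa2
  have hΛ_pos : ∀ z, 0 ≤ z → 0 < Λ z := fun z hz => by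
    rw [hΛ, mul_div_assoc]
    exact mul_pos (Real.exp_pos _) (mixture_tail_fraction_pos k hζ hσw2 hab.le hz)
  have hΛ_mono : StrictMonoOn Λ (Ici 0) := fun z hz z' hz' hzz' => by
    rw [hΛ, hΛ, mul_div_assoc, mul_div_assoc]
    exact mul_lt_mul_of_pos_left
      (mixture_tail_fraction_strictMonoOn k hζ hσw2 hab hz hz' hzz') (Real.exp_pos _)
  refine ⟨fun z hz => Finset.prod_pos fun i _ => hΛ_pos _ (hz i),
    fun z z' m hz hz' h_eq hlt => Finset.prod_lt_prod (fun i _ => hΛ_pos _ (hz i))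
      (fun i _ => ?_) ⟨m, Finset.mem_univ m, hΛ_mono (hz m) (hz' m) hlt⟩⟩
  rcases eq_or_ne i m with rfl | him
  · exact (hΛ_mono (hz i) (hz' i) hlt).le
  · rw [h_eq i him]

/-- Lemma 4 (M > 1 block fading, AWGN Alice-to-Willie channel): the product
likelihood ratio `Λ_M(z₁,…,z_M) = ∏_m Λ(z_m)` is positive and strictly
increasing in each coordinate of the vector of per-block received powers. -/
theorem product_likelihood_ratio_strict_mono_each_coordinate
    (k M : ℕ) (hk : 1 ≤ k) (hM : 1 ≤ M)
    (σw2 ζ σa2 : ℝ) (hσw2 : 0 < σw2) (hζ : 0 < ζ) (hσa2 : 0 < σa2)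
    (Λ : ℝ → ℝ)
    (hΛ : ∀ z : ℝ, Λ z = Real.exp (σa2 / ζ) *
      (∫ v in Set.Ioi (σw2 + σa2),
        (v ^ k)⁻¹ * Real.exp (-z / v) * Real.exp (-v / ζ)) /
      (∫ v in Set.Ioi σw2,
        (v ^ k)⁻¹ * Real.exp (-z / v) * Real.exp (-v / ζ))) :
    (∀ z : Fin M → ℝ, (∀ i, 0 ≤ z i) → 0 < ∏ i, Λ (z i)) ∧
    (∀ (z z' : Fin M → ℝ) (m : Fin M), (∀ i, 0 ≤ z i) → (∀ i, 0 ≤ z' i) →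
      (∀ i, i ≠ m → z i = z' i) → z m < z' m →
      ∏ i, Λ (z i) < ∏ i, Λ (z' i)) :=
  product_likelihood_ratio_strict_mono_each_coordinate_general k M σw2 ζ σa2 hσw2 hζ hσa2 Λ hΛ
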